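/- arXiv:2504.15584 — 10 statements merged into one kernel-verified Lean document; each statement's English description precedes it below -/
import Mathlib

section
/- Let N ≥ 1 be an integer, c > 0 a real number, p an integer with 1 ≤ p ≤ N, and z ∈ ℂ with z^N ≠ c^N. Then, with μ = exp(2πi/N), one has ∑_{k=0}^{N−1} μ^{kp}/(z − c·μ^k) = N·c^{N−p}·z^{p−1}/(z^N − c^N). (In particular each denominator z − c·μ^k is nonzero.) -/
open Complex Finset

/-- For `μ = exp(2πi/N)`, `c > 0`, `1 ≤ p ≤ N` and `z^N ≠ c^N`, one has
`∑_{k=0}^{N-1} μ^{kp}/(z - c μ^k) = N c^{N-p} z^{p-1}/(z^N - c^N)`. -/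
theorem stmt0 (N : ℕ) (hN : 1 ≤ N) (c : ℝ) (hc : 0 < c) (p : ℕ) (hp1 : 1 ≤ p) (hpN : p ≤ N)
    (z : ℂ) (hz : z ^ N ≠ (c : ℂ) ^ N) :
    ∑ k ∈ Finset.range N,
        (Complex.exp (2 * Real.pi * Complex.I / N)) ^ (k * p) /
          (z - (c : ℂ) * (Complex.exp (2 * Real.pi * Complex.I / N)) ^ k)
      = (N : ℂ) * (c : ℂ) ^ (N - p) * z ^ (p - 1) / (z ^ N - (c : ℂ) ^ N) := by
  set μ := Complex.exp (2 * Real.pi * Complex.I / N) with hμdef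
  have hN0 : N ≠ 0 := by omega
  have hμ : IsPrimitiveRoot μ N := Complex.isPrimitiveRoot_exp N hN0
  have hμN : μ ^ N = 1 := hμ.pow_eq_one
  have hden : z ^ N - (c : ℂ) ^ N ≠ 0 := sub_ne_zero.mpr hz
  have hk : ∀ k : ℕ, ((c : ℂ) * μ ^ k) ^ N = (c : ℂ) ^ N := by
    intro k
    rw [mul_pow, ← pow_mul, mul_comm k N, pow_mul, hμN, one_pow, mul_one]
  have hterm : ∀ k ∈ Finset.range N,
      μ ^ (k * p) / (z - (c : ℂ) * μ ^ k)
        = (∑ j ∈ Finset.range N,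
            μ ^ (k * p) * (z ^ j * ((c : ℂ) * μ ^ k) ^ (N - 1 - j))) / (z ^ N - (c : ℂ) ^ N) := by
    intro k _
    have hzk : z - (c : ℂ) * μ ^ k ≠ 0 := by
      intro h
      apply hz
      rw [sub_eq_zero] at h
      rw [h, hk]
    have hgs : (∑ j ∈ Finset.range N, z ^ j * ((c : ℂ) * μ ^ k) ^ (N - 1 - j))
        * (z - (c : ℂ) * μ ^ k) = z ^ N - (c : ℂ) ^ N := by
      rw [geom_sum₂_mul, hk]
    rw [div_eq_div_iff hzk hden, ← hgs, ← Finset.mul_sum]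
    ring
  rw [Finset.sum_congr rfl hterm, ← Finset.sum_div]
  congr 1
  rw [Finset.sum_comm]
  have hin : ∀ j ∈ Finset.range N,
      (∑ k ∈ Finset.range N, μ ^ (k * p) * (z ^ j * ((c : ℂ) * μ ^ k) ^ (N - 1 - j)))
        = z ^ j * (c : ℂ) ^ (N - 1 - j) * ∑ k ∈ Finset.range N, (μ ^ (p + (N - 1 - j))) ^ k := by
    intro j _
    rw [Finset.mul_sum]
    refine Finset.sum_congr rfl fun k _ => ?_
    rw [mul_pow, ← pow_mul, ← pow_mul, add_mul, pow_add, mul_comm k p, mul_comm k (N - 1 - j)]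
    ring
  rw [Finset.sum_congr rfl hin]
  rw [Finset.sum_eq_single (p - 1)]
  · have h1 : p + (N - 1 - (p - 1)) = N := by omega
    have h2 : N - 1 - (p - 1) = N - p := by omega
    rw [h1, h2, hμN]
    simp [Finset.sum_const]
    ring
  · intro j hj hjp
    have hjN : j < N := Finset.mem_range.mp hj
    have hm1 : 1 ≤ p + (N - 1 - j) := by omega
    have hne : μ ^ (p + (N - 1 - j)) ≠ 1 := by
      intro h
      rw [hμ.pow_eq_one_iff_dvd] at h
      have h1 := Nat.le_of_dvd (by omega) h
      have h2 : N ∣ (p + (N - 1 - j) - N) := Nat.dvd_sub h (dvd_refl N)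
      have h3 : p + (N - 1 - j) - N = 0 := by
        by_contra h0
        have := Nat.le_of_dvd (Nat.pos_of_ne_zero h0) h2
        omega
      omega
    have hpow : (μ ^ (p + (N - 1 - j))) ^ N = 1 := by
      rw [← pow_mul, mul_comm, pow_mul, hμN, one_pow]
    rw [geom_sum_eq hne, hpow, sub_self, zero_div, mul_zero]
  · intro h
    exact absurd (Finset.mem_range.mpr (by omega)) h
end

section
/- Let H be a complex Hilbert space and M : H → H a continuous linear map with operator norm ‖M‖ ≤ 1. Let λ ∈ ℂ with |λ| = 1. Then for every integer k ≥ 1 and every u ∈ H, (M − λ·id)^k u = 0 implies M u = λ u. In other words, every eigenvalue of modulus one of a contraction is semi-simple. -/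
/-!
If `u` lies in the generalized eigenspace of a unimodular `λ` but not in the eigenspace, one may
assume `(M - λ)² u = 0`; then `v := (M - λ) u ≠ 0` and `Mⁿ u = λⁿ u + n λⁿ⁻¹ v` grows linearly in
norm, which is impossible for a contraction.
-/

namespace ContinuousLinearMap

theorem apply_eq_zero_of_pow_apply_eq_zero {R E : Type*} [Semiring R] [TopologicalSpace E]
    [AddCommMonoid E] [Module R E] (N : E →L[R] E) (hN : ∀ u, N (N u) = 0 → N u = 0) :
    ∀ k : ℕ, 1 ≤ k → ∀ u : E, (N ^ k) u = 0 → N u = 0 := by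
  intro k hk
  induction k, hk using Nat.le_induction with
  | base => simp
  | succ k hk ih =>
    intro u hu
    rw [pow_succ, mul_apply_eq_comp] at hu
    exact hN u (ih (N u) hu)

variable {𝕜 E : Type*} [RCLike 𝕜] [NormedAddCommGroup E] [NormedSpace 𝕜 E]

theorem pow_succ_apply_of_apply_eq_smul_add {M : E →L[𝕜] E} {l : 𝕜} {u v : E}
    (hu : M u = l • u + v) (hv : M v = l • v) (n : ℕ) :
    (M ^ (n + 1)) u = l ^ (n + 1) • u + ((n + 1 : 𝕜) * l ^ n) • v := by
  induction n with
  | zero => simpa using hu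
  | succ n ih =>
    rw [pow_succ', mul_apply_eq_comp, ih, map_add, map_smul, map_smul, hu, hv]
    push_cast
    module

theorem eq_zero_of_apply_eq_smul_add_of_bounded {M : E →L[𝕜] E} {l : 𝕜} (hl : ‖l‖ = 1)
    {u v : E} (hu : M u = l • u + v) (hv : M v = l • v) {C : ℝ}
    (hC : ∀ n, ‖(M ^ n) u‖ ≤ C) : v = 0 := by
  have hgrowth : ∀ n : ℕ, (n + 1) * ‖v‖ ≤ C + ‖u‖ := fun n ↦
    calc (n + 1) * ‖v‖ = ‖((n + 1 : 𝕜) * l ^ n) • v‖ := by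
          rw [norm_smul, norm_mul, norm_pow, hl, one_pow, mul_one]
          norm_cast
      _ = ‖(M ^ (n + 1)) u - l ^ (n + 1) • u‖ := by
          rw [pow_succ_apply_of_apply_eq_smul_add hu hv, add_sub_cancel_left]
      _ ≤ ‖(M ^ (n + 1)) u‖ + ‖l ^ (n + 1) • u‖ := norm_sub_le _ _
      _ ≤ C + ‖u‖ := by
          rw [norm_smul, norm_pow, hl, one_pow, one_mul]
          exact add_le_add_left (hC _) _
  by_contra hv0
  have hpos : 0 < ‖v‖ := norm_pos_iff.mpr hv0
  obtain ⟨n, hn⟩ := exists_nat_gt ((C + ‖u‖) / ‖v‖)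
  rw [div_lt_iff₀ hpos] at hn
  linarith [hgrowth n]

theorem norm_pow_apply_le_of_norm_le_one {M : E →L[𝕜] E} (hM : ‖M‖ ≤ 1) (u : E) (n : ℕ) :
    ‖(M ^ n) u‖ ≤ ‖u‖ := by
  induction n with
  | zero => simp
  | succ n ih =>
    rw [pow_succ', mul_apply_eq_comp]
    exact (M.le_of_opNorm_le hM _).trans (by rwa [one_mul])

end ContinuousLinearMap

theorem stmt4_general {H : Type*} [NormedAddCommGroup H] [InnerProductSpace ℂ H]
    (M : H →L[ℂ] H) (hM : ‖M‖ ≤ 1) (l : ℂ) (hl : ‖l‖ = 1) :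
    ∀ k : ℕ, 1 ≤ k → ∀ u : H, ((M - l • (1 : H →L[ℂ] H)) ^ k) u = 0 → M u = l • u := by
  set N := M - l • (1 : H →L[ℂ] H)
  have hN : ∀ u, M u = l • u + N u := fun u ↦ by simp [N]
  have hsq : ∀ u, N (N u) = 0 → N u = 0 := fun u hu ↦
    ContinuousLinearMap.eq_zero_of_apply_eq_smul_add_of_bounded hl (hN u)
      (by rw [hN, hu, add_zero]) (ContinuousLinearMap.norm_pow_apply_le_of_norm_le_one hM u)
  intro k hk u hu
  rw [hN u, N.apply_eq_zero_of_pow_apply_eq_zero hsq k hk u hu, add_zero]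

/-- Every eigenvalue of modulus one of a contraction on a complex Hilbert space is
semi-simple: `(M - λ·id)^k u = 0` for some `k ≥ 1` implies `M u = λ u`. -/
theorem stmt4 {H : Type*} [NormedAddCommGroup H] [InnerProductSpace ℂ H] [CompleteSpace H]
    (M : H →L[ℂ] H) (hM : ‖M‖ ≤ 1) (l : ℂ) (hl : ‖l‖ = 1) :
    ∀ k : ℕ, 1 ≤ k → ∀ u : H, ((M - l • (1 : H →L[ℂ] H)) ^ k) u = 0 → M u = l • u :=
  stmt4_general M hM l hl
end

section
/- Let z ∈ ℂ with |z| = 1, let x₀ ≥ 1 be an integer, and let C⁰, C¹ be 2×2 unitary complex matrices. Then |z^{2x₀} − C⁰₂₁ C¹₁₂|² = |C⁰₁₁ C¹₁₁|² + |C¹₂₁ z^{2x₀} + C⁰₂₁ · det C¹|². In particular, when z^{2x₀} ≠ C⁰₂₁C¹₁₂, the transmission probability T(z) = |C⁰₁₁C¹₁₁ / (z^{2x₀} − C⁰₂₁C¹₁₂)|² and the reflection probability R(z) = |(C¹₂₁ z^{2x₀} + C⁰₂₁ det C¹)/(z^{2x₀} − C⁰₂₁C¹₁₂)|² of the double barrier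 quantum walk satisfy T(z) + R(z) = 1. -/
/-!
Write `w = z^{2x₀}`, so `‖w‖ = 1`. For a unitary `U`, `adj U = det U • Uᴴ`; for `2 × 2` matrices
this says `C¹₁₂ = -det C¹ · conj C¹₂₁`. Substituting this for `C¹₁₂` and expanding both sides as
`x · conj x`, the cross terms agree and the rest reduces, via `|C⁰₁₁|² + |C⁰₂₁|² = 1` and
`|C¹₁₁|² + |C¹₂₁|² = 1`, to `1 + |C⁰₂₁|²|C¹₂₁|²` on both sides. Dividing by the left-hand side
gives `T + R = 1`.
-/

open Matrix

namespace Matrix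

variable {n α : Type*} [DecidableEq n] [Fintype n] [CommRing α] [StarRing α]

theorem adjugate_eq_det_smul_star_of_mem_unitaryGroup {U : Matrix n n α}
    (hU : U ∈ unitaryGroup n α) : U.adjugate = U.det • star U := by
  calc U.adjugate = U.adjugate * U * star U := by rw [mul_assoc, hU.2, mul_one]
    _ = U.det • star U := by rw [adjugate_mul, smul_one_mul]

theorem entry_zero_one_eq_of_mem_unitaryGroup {U : Matrix (Fin 2) (Fin 2) α}
    (hU : U ∈ unitaryGroup (Fin 2) α) : U 0 1 = -(U.det * star (U 1 0)) := by
  have h := congrFun (congrFun (adjugate_eq_det_smul_star_of_mem_unitaryGroup hU) 0) 1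
  simp only [adjugate_fin_two, of_apply, cons_val', cons_val_zero,
    cons_val_one, smul_apply, star_apply, smul_eq_mul] at h
  rw [← h, neg_neg]

end Matrix

theorem norm_sq_add_norm_sq_of_mem_unitaryGroup {𝕜 : Type*} [RCLike 𝕜]
    {U : Matrix (Fin 2) (Fin 2) 𝕜} (hU : U ∈ unitaryGroup (Fin 2) 𝕜) :
    ‖U 0 0‖ ^ 2 + ‖U 1 0‖ ^ 2 = 1 := by
  have h := congrFun (congrFun hU.1 0) 0
  simp only [mul_apply, Fin.sum_univ_two, star_apply, one_apply_eq] at h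
  rw [mul_comm (star (U 0 0)), mul_comm (star (U 1 0))] at h
  exact_mod_cast (RCLike.mul_conj (U 0 0) ▸ RCLike.mul_conj (U 1 0) ▸ h :)

theorem norm_sq_add_mul_mul_star_eq {𝕜 : Type*} [RCLike 𝕜] {w a α β c d : 𝕜}
    (hw : ‖w‖ = 1) (hd : ‖d‖ = 1) (hαa : ‖α‖ ^ 2 + ‖a‖ ^ 2 = 1)
    (hβc : ‖β‖ ^ 2 + ‖c‖ ^ 2 = 1) :
    ‖w + a * (d * star c)‖ ^ 2 = ‖α * β‖ ^ 2 + ‖c * w + a * d‖ ^ 2 := by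
  have hw' : w * star w = 1 := by rw [RCLike.star_def, RCLike.mul_conj, hw]; simp
  have hd' : d * star d = 1 := by rw [RCLike.star_def, RCLike.mul_conj, hd]; simp
  have hαa' : α * star α + a * star a = 1 := by
    simp only [RCLike.star_def, RCLike.mul_conj]; exact_mod_cast hαa
  have hβc' : β * star β + c * star c = 1 := by
    simp only [RCLike.star_def, RCLike.mul_conj]; exact_mod_cast hβc
  apply (RCLike.ofReal_injective (K := 𝕜))
  push_cast
  simp only [← RCLike.mul_conj, ← RCLike.star_def, star_add, star_mul, star_star]
  linear_combination (1 - c * star c) * hw' + a * star a * (c * star c - 1) * hd'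
    - β * star β * hαa' + (a * star a - 1) * hβc'

theorem norm_div_sq_add_norm_div_sq_eq_one {𝕜 : Type*} [NormedField 𝕜] {x y u : 𝕜}
    (hx : x ≠ 0) (h : ‖x‖ ^ 2 = ‖y‖ ^ 2 + ‖u‖ ^ 2) : ‖y / x‖ ^ 2 + ‖u / x‖ ^ 2 = 1 := by
  rw [norm_div, norm_div, div_pow, div_pow, ← add_div, ← h, div_self (by positivity)]

theorem stmt6_general (z : ℂ) (hz : ‖z‖ = 1) (x₀ : ℕ)
    (C0 C1 : Matrix (Fin 2) (Fin 2) ℂ)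
    (hC0 : C0 ∈ Matrix.unitaryGroup (Fin 2) ℂ) (hC1 : C1 ∈ Matrix.unitaryGroup (Fin 2) ℂ) :
    ‖z ^ (2 * x₀) - C0 1 0 * C1 0 1‖ ^ 2
        = ‖C0 0 0 * C1 0 0‖ ^ 2
          + ‖C1 1 0 * z ^ (2 * x₀) + C0 1 0 * C1.det‖ ^ 2
      ∧ (z ^ (2 * x₀) ≠ C0 1 0 * C1 0 1 →
          ‖C0 0 0 * C1 0 0 / (z ^ (2 * x₀) - C0 1 0 * C1 0 1)‖ ^ 2
            + ‖
                (C1 1 0 * z ^ (2 * x₀) + C0 1 0 * C1.det) / (z ^ (2 * x₀) - C0 1 0 * C1 0 1)‖ ^ 2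
            = 1) := by
  have hdet : ‖C1.det‖ = 1 := CStarRing.norm_of_mem_unitary (det_of_mem_unitary hC1)
  have key : ‖z ^ (2 * x₀) - C0 1 0 * C1 0 1‖ ^ 2
      = ‖C0 0 0 * C1 0 0‖ ^ 2 + ‖C1 1 0 * z ^ (2 * x₀) + C0 1 0 * C1.det‖ ^ 2 := by
    rw [entry_zero_one_eq_of_mem_unitaryGroup hC1, mul_neg, sub_neg_eq_add]
    exact norm_sq_add_mul_mul_star_eq (by rw [norm_pow, hz, one_pow]) hdet
      (norm_sq_add_norm_sq_of_mem_unitaryGroup hC0) (norm_sq_add_norm_sq_of_mem_unitaryGroup hC1)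
  exact ⟨key, fun hne => norm_div_sq_add_norm_div_sq_eq_one (sub_ne_zero.mpr hne) key⟩

/-- For `|z| = 1` and unitary coins `C⁰, C¹`:
`|z^{2x₀} - C⁰₂₁C¹₁₂|² = |C⁰₁₁C¹₁₁|² + |C¹₂₁ z^{2x₀} + C⁰₂₁ det C¹|²`;
in particular the transmission and reflection probabilities of the double barrier
quantum walk sum to one. -/
theorem stmt6 (z : ℂ) (hz : ‖z‖ = 1) (x₀ : ℕ) (hx : 1 ≤ x₀)
    (C0 C1 : Matrix (Fin 2) (Fin 2) ℂ)
    (hC0 : C0 ∈ Matrix.unitaryGroup (Fin 2) ℂ) (hC1 : C1 ∈ Matrix.unitaryGroup (Fin 2) ℂ) :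
    ‖z ^ (2 * x₀) - C0 1 0 * C1 0 1‖ ^ 2
        = ‖C0 0 0 * C1 0 0‖ ^ 2
          + ‖C1 1 0 * z ^ (2 * x₀) + C0 1 0 * C1.det‖ ^ 2
      ∧ (z ^ (2 * x₀) ≠ C0 1 0 * C1 0 1 →
          ‖C0 0 0 * C1 0 0 / (z ^ (2 * x₀) - C0 1 0 * C1 0 1)‖ ^ 2
            + ‖
                (C1 1 0 * z ^ (2 * x₀) + C0 1 0 * C1.det) / (z ^ (2 * x₀) - C0 1 0 * C1 0 1)‖ ^ 2
            = 1) :=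
  stmt6_general z hz x₀ C0 C1 hC0 hC1
end

section
/- Let c₁, c₂ > 0 and ε > 0 be real numbers, let m ≥ 1 be an integer, and let z ∈ ℂ with |z| = 1. Set a = exp(−2c₁/ε), b = exp(−2c₂/ε), and t = √((1 − a)(1 − b)). Then z^m ≠ t and a·b/|z^m − t|² ≤ 4·exp(−2|c₁ − c₂|/ε). -/
/-!
With `t = √((1-a)(1-b))` one has `1 - t² = a + b - ab ≥ max a b`, and `1 - t² ≤ 2(1 - t)`;
since `|z^m| = 1`, also `|z^m - t| ≥ 1 - t`. Hence `ab = (min/max) · max² ≤ 4 (min/max) |z^m - t|²`,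
and for `a = e^x`, `b = e^y` the ratio `min/max` is `e^{-|x - y|}`.
-/

open Real

lemma max_le_two_mul_one_sub_sqrt {a b : ℝ} (ha₀ : 0 ≤ a) (ha₁ : a ≤ 1) (hb₀ : 0 ≤ b)
    (hb₁ : b ≤ 1) : max a b ≤ 2 * (1 - √((1 - a) * (1 - b))) := by
  set t := √((1 - a) * (1 - b))
  have ht₀ : 0 ≤ t := sqrt_nonneg _
  have ht_sq : t ^ 2 = (1 - a) * (1 - b) := sq_sqrt (by nlinarith)
  have ht₁ : t ≤ 1 := by nlinarith
  apply max_le <;> nlinarith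

lemma one_sub_le_norm_sub_ofReal {w : ℂ} (hw : ‖w‖ = 1) {t : ℝ} (ht : 0 ≤ t) :
    1 - t ≤ ‖w - t‖ := by
  simpa [hw, Complex.norm_real, abs_of_nonneg ht] using norm_sub_norm_le w (t : ℂ)

lemma ne_ofReal_sqrt_and_mul_div_norm_sub_sq_le {a b : ℝ} (ha₀ : 0 < a) (ha₁ : a ≤ 1)
    (hb₀ : 0 < b) (hb₁ : b ≤ 1) {w : ℂ} (hw : ‖w‖ = 1) :
    w ≠ (√((1 - a) * (1 - b)) : ℂ) ∧
      a * b / ‖w - √((1 - a) * (1 - b))‖ ^ 2 ≤ 4 * (min a b / max a b) := by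
  set t := √((1 - a) * (1 - b))
  have h_max : max a b ≤ 2 * (1 - t) := max_le_two_mul_one_sub_sqrt ha₀.le ha₁ hb₀.le hb₁
  have h_max_pos : 0 < max a b := lt_max_of_lt_left ha₀
  have h_dist : 1 - t ≤ ‖w - t‖ := one_sub_le_norm_sub_ofReal hw (sqrt_nonneg _)
  have h_dist_pos : 0 < ‖w - t‖ := by linarith
  refine ⟨sub_ne_zero.mp (norm_pos_iff.mp h_dist_pos), ?_⟩
  have h_sq : max a b ^ 2 ≤ 4 * ‖w - t‖ ^ 2 := by nlinarith
  rw [← min_mul_max a b, div_le_iff₀ (by positivity), mul_div_assoc', div_mul_eq_mul_div,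
    le_div_iff₀ h_max_pos]
  nlinarith [lt_min ha₀ hb₀]

lemma min_exp_div_max_exp (x y : ℝ) :
    min (exp x) (exp y) / max (exp x) (exp y) = exp (-|x - y|) := by
  rcases le_total x y with h | h
  · rw [min_eq_left (exp_le_exp.mpr h), max_eq_right (exp_le_exp.mpr h), ← exp_sub,
      abs_of_nonpos (sub_nonpos.mpr h), neg_neg]
  · rw [min_eq_right (exp_le_exp.mpr h), max_eq_left (exp_le_exp.mpr h), ← exp_sub,
      abs_of_nonneg (sub_nonneg.mpr h), neg_sub]

theorem stmt9_general (c₁ c₂ ε : ℝ) (hc₁ : 0 < c₁) (hc₂ : 0 < c₂) (hε : 0 < ε)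
    (m : ℕ) (z : ℂ) (hz : ‖z‖ = 1) :
    z ^ m ≠ ((Real.sqrt ((1 - Real.exp (-2 * c₁ / ε)) * (1 - Real.exp (-2 * c₂ / ε))) : ℝ) : ℂ)
      ∧ Real.exp (-2 * c₁ / ε) * Real.exp (-2 * c₂ / ε) /
            ‖(z ^ m -
              ((Real.sqrt ((1 - Real.exp (-2 * c₁ / ε)) * (1 - Real.exp (-2 * c₂ / ε))) : ℝ) : ℂ))‖ ^ 2
          ≤ 4 * Real.exp (-2 * |c₁ - c₂| / ε) := by
  have h_exp_le_one {c : ℝ} (hc : 0 < c) : exp (-2 * c / ε) ≤ 1 :=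
    exp_le_one_iff.mpr (div_nonpos_of_nonpos_of_nonneg (by linarith) hε.le)
  have h_ratio : exp (-2 * |c₁ - c₂| / ε) = exp (-|-2 * c₁ / ε - -2 * c₂ / ε|) := by
    rw [← sub_div, abs_div, abs_of_pos hε, show -2 * c₁ - -2 * c₂ = -2 * (c₁ - c₂) by ring,
      abs_mul, abs_neg, abs_two, neg_mul, neg_div]
  rw [h_ratio, ← min_exp_div_max_exp]
  exact ne_ofReal_sqrt_and_mul_div_norm_sub_sq_le (exp_pos _) (h_exp_le_one hc₁) (exp_pos _)
    (h_exp_le_one hc₂) (by rw [norm_pow, hz, one_pow])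

/-- For the asymmetric double barrier with `a = e^{-2c₁/ε}`, `b = e^{-2c₂/ε}` and
`t = √((1-a)(1-b))`: for `|z| = 1` one has `z^m ≠ t` and the transmission probability
`a·b/|z^m - t|²` is bounded by `4·e^{-2|c₁-c₂|/ε}`. -/
theorem stmt9 (c₁ c₂ ε : ℝ) (hc₁ : 0 < c₁) (hc₂ : 0 < c₂) (hε : 0 < ε)
    (m : ℕ) (hm : 1 ≤ m) (z : ℂ) (hz : ‖z‖ = 1) :
    z ^ m ≠ ((Real.sqrt ((1 - Real.exp (-2 * c₁ / ε)) * (1 - Real.exp (-2 * c₂ / ε))) : ℝ) : ℂ)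
      ∧ Real.exp (-2 * c₁ / ε) * Real.exp (-2 * c₂ / ε) /
            ‖(z ^ m -
              ((Real.sqrt ((1 - Real.exp (-2 * c₁ / ε)) * (1 - Real.exp (-2 * c₂ / ε))) : ℝ) : ℂ))‖ ^ 2
          ≤ 4 * Real.exp (-2 * |c₁ - c₂| / ε) :=
  stmt9_general c₁ c₂ ε hc₁ hc₂ hε m z hz
end

section
/- Let z ∈ ℂ \ {0}, let x₀, x₁ be integers with 0 < x₀ < x₁, and let C⁰, C¹, C² be 2×2 complex matrices with nonzero (1,1) entries. Then the first column of the matrix C⁰₁₁ · C¹₁₁ · C²₁₁ · 𝒯_z(C²) · D_z^{x₁−x₀−1} · 𝒯_z(C¹) · D_z^{x₀−1} · 𝒯_z(C⁰) equals the vector (𝚊(z), 𝚋(z)), where 𝚊(z) = z^{x₁+1} − C¹₂₁C²₁₂ z^{2x₀−x₁+1} − C⁰₂₁C¹₁₂ z^{x₁−2x₀+1} − C⁰₂₁C²₁₂ (det C¹) z^{−x₁+1} and 𝚋(z) = C²₂₁ z^{x₁} + C¹₂₁ (det C²) z^{2x₀−x₁} − C⁰₂₁C¹₁₂C²₂₁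 z^{x₁−2x₀} + C⁰₂₁ (det C¹)(det C²) z^{−x₁}. -/
open Matrix

/-- The transfer matrix `𝒯_z(C) = C₁₁⁻¹ [[z, -C₁₂],[C₂₁, z⁻¹ det C]]`. -/
noncomputable def transferMatrix (z : ℂ) (C : Matrix (Fin 2) (Fin 2) ℂ) :
    Matrix (Fin 2) (Fin 2) ℂ :=
  (C 0 0)⁻¹ • !![z, -C 0 1; C 1 0, z⁻¹ * C.det]

/-- The free transfer matrix `D_z = [[z, 0],[0, z⁻¹]]`. -/
noncomputable def freeTransfer (z : ℂ) : Matrix (Fin 2) (Fin 2) ℂ := !![z, 0; 0, z⁻¹]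

/-!
The theorem is a direct computation. Clearing the scalars `C₁₁⁻¹` leaves a product of five
explicit `2 × 2` matrices whose entries are Laurent monomials in `z`; working with integer
exponents throughout, every exponent splits into the atoms `z`, `z ^ x₀`, `z ^ x₁`, and the
identity becomes one of rational functions in these.
-/

theorem smul_transferMatrix {C : Matrix (Fin 2) (Fin 2) ℂ} (hC : C 0 0 ≠ 0) (z : ℂ) :
    C 0 0 • transferMatrix z C = !![z, -C 0 1; C 1 0, z⁻¹ * C.det] := by
  rw [transferMatrix, smul_smul, mul_inv_cancel₀ hC, one_smul]

theorem freeTransfer_pow (z : ℂ) (n : ℕ) :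
    freeTransfer z ^ n = !![z ^ (n : ℤ), 0; 0, z ^ (-(n : ℤ))] := by
  simp only [_root_.zpow_neg, zpow_natCast, ← inv_pow]
  induction n with
  | zero => simp [Matrix.one_fin_two]
  | succ n ih =>
    rw [pow_succ, ih, freeTransfer, Matrix.mul_fin_two]
    simp [pow_succ]

theorem smul_mul_five {n R : Type*} [Fintype n] [CommSemiring R] {a b c : R}
    (T₂ A T₁ B T₀ : Matrix n n R) :
    (a * b * c) • (T₂ * A * T₁ * B * T₀) = (c • T₂) * A * (b • T₁) * B * (a • T₀) := by
  simp only [Matrix.smul_mul, Matrix.mul_smul, smul_smul]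
  congr 1
  ring

theorem tripleBarrier_firstColumn {z : ℂ} (hz : z ≠ 0) (x₀ x₁ : ℤ)
    (C0 C1 C2 : Matrix (Fin 2) (Fin 2) ℂ) :
    let P := !![z, -C2 0 1; C2 1 0, z⁻¹ * C2.det]
        * !![z ^ (x₁ - x₀ - 1), 0; 0, z ^ (-(x₁ - x₀ - 1))]
        * !![z, -C1 0 1; C1 1 0, z⁻¹ * C1.det]
        * !![z ^ (x₀ - 1), 0; 0, z ^ (-(x₀ - 1))]
        * !![z, -C0 0 1; C0 1 0, z⁻¹ * C0.det]
    P 0 0 = z ^ (x₁ + 1) - C1 1 0 * C2 0 1 * z ^ (2 * x₀ - x₁ + 1)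
          - C0 1 0 * C1 0 1 * z ^ (x₁ - 2 * x₀ + 1)
          - C0 1 0 * C2 0 1 * C1.det * z ^ (-x₁ + 1)
    ∧ P 1 0 = C2 1 0 * z ^ x₁ + C1 1 0 * C2.det * z ^ (2 * x₀ - x₁)
          - C0 1 0 * C1 0 1 * C2 1 0 * z ^ (x₁ - 2 * x₀)
          + C0 1 0 * C1.det * C2.det * z ^ (-x₁) := by
  intro P
  simp only [P, Matrix.mul_fin_two, Matrix.of_apply, Matrix.cons_val', Matrix.cons_val_zero,
    Matrix.cons_val_one, Matrix.empty_val', Matrix.cons_val_fin_one, Matrix.det_fin_two]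
  simp only [neg_sub, zpow_add₀ hz, zpow_sub₀ hz, _root_.zpow_neg, two_mul, zpow_one]
  constructor <;> field_simp <;> ring

/-- The first column of the transfer-matrix product for the triple barrier quantum walk:
`C⁰₁₁C¹₁₁C²₁₁ · 𝒯_z(C²) D_z^{x₁-x₀-1} 𝒯_z(C¹) D_z^{x₀-1} 𝒯_z(C⁰)` has first column
`(𝚊(z), 𝚋(z))` with the explicit amplitudes below. -/
theorem stmt10 (z : ℂ) (hz : z ≠ 0) (x₀ x₁ : ℕ) (h0 : 0 < x₀) (h01 : x₀ < x₁)
    (C0 C1 C2 : Matrix (Fin 2) (Fin 2) ℂ)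
    (h0' : C0 0 0 ≠ 0) (h1' : C1 0 0 ≠ 0) (h2' : C2 0 0 ≠ 0) :
    ((C0 0 0 * C1 0 0 * C2 0 0) •
        (transferMatrix z C2 * freeTransfer z ^ (x₁ - x₀ - 1) * transferMatrix z C1 *
          freeTransfer z ^ (x₀ - 1) * transferMatrix z C0)) 0 0
      = z ^ ((x₁ : ℤ) + 1) - C1 1 0 * C2 0 1 * z ^ (2 * (x₀ : ℤ) - (x₁ : ℤ) + 1)
          - C0 1 0 * C1 0 1 * z ^ ((x₁ : ℤ) - 2 * (x₀ : ℤ) + 1)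
          - C0 1 0 * C2 0 1 * C1.det * z ^ (-(x₁ : ℤ) + 1)
    ∧ ((C0 0 0 * C1 0 0 * C2 0 0) •
        (transferMatrix z C2 * freeTransfer z ^ (x₁ - x₀ - 1) * transferMatrix z C1 *
          freeTransfer z ^ (x₀ - 1) * transferMatrix z C0)) 1 0
      = C2 1 0 * z ^ (x₁ : ℤ) + C1 1 0 * C2.det * z ^ (2 * (x₀ : ℤ) - (x₁ : ℤ))
          - C0 1 0 * C1 0 1 * C2 1 0 * z ^ ((x₁ : ℤ) - 2 * (x₀ : ℤ))
          + C0 1 0 * C1.det * C2.det * z ^ (-(x₁ : ℤ)) := by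
  have hgap : ((x₁ - x₀ - 1 : ℕ) : ℤ) = x₁ - x₀ - 1 := by omega
  have hsite : ((x₀ - 1 : ℕ) : ℤ) = x₀ - 1 := by omega
  rw [smul_mul_five, smul_transferMatrix h0', smul_transferMatrix h1', smul_transferMatrix h2',
    freeTransfer_pow, freeTransfer_pow, hgap, hsite]
  exact tripleBarrier_firstColumn hz x₀ x₁ C0 C1 C2
end

section
/- Let r₀, r₂, r₃ ∈ (−1, 1) be real numbers, x₀ = 2, x₁ = 3, and let C⁰, C¹, C² be the rotation coins C⁰ = [[√(1−r₀²), r₀], [−r₀, √(1−r₀²)]], C¹ = [[√(1−r₂²), r₂], [−r₂, √(1−r₂²)]], C² = [[√(1−r₃²), r₃], [−r₃, √(1−r₃²)]]. Define 𝚋(z) = C²₂₁ z^{x₁} + C¹₂₁ (det C²) z^{2x₀−x₁} − C⁰₂₁C¹₁₂C²₂₁ z^{x₁−2x₀} + C⁰₂₁ (det C¹)(det C²) z^{−x₁}. Then 𝚋(i) = i·(r₃ − r₂ + r₀r₂r₃ − r₀), and 𝚋(i) = 0 if and only if r₂ = (r₃ − r₀)/(1 − r₀r₃). (Note 1 − r₀r₃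 > 0.) -/
open Matrix

theorem det_rotationCoin {r : ℝ} (hr : r ^ 2 ≤ 1) :
    (!![(Real.sqrt (1 - r ^ 2) : ℂ), (r : ℂ); -(r : ℂ), (Real.sqrt (1 - r ^ 2) : ℂ)]).det = 1 := by
  rw [det_fin_two_of, ← Complex.ofReal_mul, Real.mul_self_sqrt (by linarith)]
  push_cast
  ring

theorem sq_le_one_of_mem_Ioo {r : ℝ} (hr : r ∈ Set.Ioo (-1 : ℝ) 1) : r ^ 2 ≤ 1 := by
  nlinarith [hr.1, hr.2]

theorem one_sub_mul_pos_of_mem_Ioo {a b : ℝ} (ha : a ∈ Set.Ioo (-1 : ℝ) 1)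
    (hb : b ∈ Set.Ioo (-1 : ℝ) 1) : 0 < 1 - a * b := by
  nlinarith [ha.1, ha.2, hb.1, hb.2]

theorem resonance_iff {r₀ r₂ r₃ : ℝ} (h : 1 - r₀ * r₃ ≠ 0) :
    r₃ - r₂ + r₀ * r₂ * r₃ - r₀ = 0 ↔ r₂ = (r₃ - r₀) / (1 - r₀ * r₃) := by
  rw [eq_div_iff h]
  constructor <;> intro h' <;> linarith

/-- Resonant tunneling for the non-symmetric triple barrier with rotation coins at sites
`0, 2, 3`: the reflection amplitude at `z = i` equals `i(r₃ - r₂ + r₀r₂r₃ - r₀)`, which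
vanishes iff `r₂ = (r₃ - r₀)/(1 - r₀r₃)`; moreover `1 - r₀r₃ > 0`. -/
theorem stmt11 (r₀ r₂ r₃ : ℝ) (h₀ : r₀ ∈ Set.Ioo (-1 : ℝ) 1) (h₂ : r₂ ∈ Set.Ioo (-1 : ℝ) 1)
    (h₃ : r₃ ∈ Set.Ioo (-1 : ℝ) 1) :
    let C0 : Matrix (Fin 2) (Fin 2) ℂ :=
      !![(Real.sqrt (1 - r₀ ^ 2) : ℂ), (r₀ : ℂ); -(r₀ : ℂ), (Real.sqrt (1 - r₀ ^ 2) : ℂ)]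
    let C1 : Matrix (Fin 2) (Fin 2) ℂ :=
      !![(Real.sqrt (1 - r₂ ^ 2) : ℂ), (r₂ : ℂ); -(r₂ : ℂ), (Real.sqrt (1 - r₂ ^ 2) : ℂ)]
    let C2 : Matrix (Fin 2) (Fin 2) ℂ :=
      !![(Real.sqrt (1 - r₃ ^ 2) : ℂ), (r₃ : ℂ); -(r₃ : ℂ), (Real.sqrt (1 - r₃ ^ 2) : ℂ)]
    let x₀ : ℤ := 2
    let x₁ : ℤ := 3
    let b : ℂ := C2 1 0 * Complex.I ^ x₁ + C1 1 0 * C2.det * Complex.I ^ (2 * x₀ - x₁)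
      - C0 1 0 * C1 0 1 * C2 1 0 * Complex.I ^ (x₁ - 2 * x₀)
      + C0 1 0 * C1.det * C2.det * Complex.I ^ (-x₁)
    b = Complex.I * ((r₃ : ℂ) - (r₂ : ℂ) + (r₀ : ℂ) * (r₂ : ℂ) * (r₃ : ℂ) - (r₀ : ℂ))
      ∧ (b = 0 ↔ r₂ = (r₃ - r₀) / (1 - r₀ * r₃))
      ∧ 0 < 1 - r₀ * r₃ := by
  intro C0 C1 C2 x₀ x₁ b
  have hpos : 0 < 1 - r₀ * r₃ := one_sub_mul_pos_of_mem_Ioo h₀ h₃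
  have hb : b = Complex.I * ((r₃ : ℂ) - r₂ + r₀ * r₂ * r₃ - r₀) := by
    have hC1 : C1.det = 1 := det_rotationCoin (sq_le_one_of_mem_Ioo h₂)
    have hC2 : C2.det = 1 := det_rotationCoin (sq_le_one_of_mem_Ioo h₃)
    simp only [b, hC1, hC2, C0, C1, C2, x₀, x₁]
    -- `norm_num` evaluates `i ^ 3, i ^ 1, i ^ (-1), i ^ (-3)` to `-i, i, -i, i`.
    norm_num
    ring
  refine ⟨hb, ?_, hpos⟩
  rw [hb, mul_eq_zero, or_iff_right Complex.I_ne_zero, ← resonance_iff hpos.ne']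
  norm_cast
end

section
/- Let V be a module over a commutative ring, let A and P be linear endomorphisms of V with P∘P = P and A∘P = P∘A, and let z be a scalar such that A∘P − z·id is invertible. Then X := (A∘P − z·id)⁻¹∘P satisfies (A − z·id)∘X = X∘(A − z·id) = P, as well as P∘X = X∘P = X. -/
private lemma aux1 {S : Type*} [Ring S] (A P c : S) (hc : ∀ x, c * x = x * c)
    (hP : P * P = P) (hAP : A * P = P * A) (h : IsUnit (A * P - c)) :
    (A - c) * (Ring.inverse (A * P - c) * P) = P
      ∧ (Ring.inverse (A * P - c) * P) * (A - c) = P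
      ∧ P * (Ring.inverse (A * P - c) * P) = Ring.inverse (A * P - c) * P
      ∧ (Ring.inverse (A * P - c) * P) * P = Ring.inverse (A * P - c) * P := by
  have hBu : (A * P - c) * Ring.inverse (A * P - c) = 1 := Ring.mul_inverse_cancel _ h
  have huB : Ring.inverse (A * P - c) * (A * P - c) = 1 := Ring.inverse_mul_cancel _ h
  set B : S := A * P - c with hBdef
  set u : S := Ring.inverse B with hudef
  have hPB : P * B = B * P := by
    rw [hBdef, mul_sub, sub_mul, hc, ← mul_assoc, ← hAP]
  have hPu : P * u = u * P :=
    calc P * u = u * B * (P * u) := by rw [huB, one_mul]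
    _ = u * (B * P) * u := by rw [mul_assoc, ← mul_assoc B P u, ← mul_assoc]
    _ = u * P * (B * u) := by rw [← hPB, ← mul_assoc u P B, mul_assoc]
    _ = u * P := by rw [hBu, mul_one]
  have hAzP : (A - c) * P = B * P := by
    rw [hBdef, sub_mul, sub_mul, mul_assoc, hP]
  have hPAz : P * (A - c) = B * P := by
    rw [← hAzP, mul_sub, sub_mul, ← hAP, hc]
  refine ⟨?_, ?_, ?_, ?_⟩
  · calc (A - c) * (u * P) = (A - c) * (P * u) := by rw [hPu]
    _ = (A - c) * P * u := by rw [mul_assoc]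
    _ = B * P * u := by rw [hAzP]
    _ = B * u * P := by rw [mul_assoc, hPu, ← mul_assoc]
    _ = P := by rw [hBu, one_mul]
  · calc u * P * (A - c) = u * B * P := by rw [mul_assoc, hPAz, ← mul_assoc]
    _ = P := by rw [huB, one_mul]
  · rw [← mul_assoc, hPu, mul_assoc, hP]
  · rw [mul_assoc, hP]

/-- If `P` is an idempotent commuting with `A` and `A∘P - z·id` is invertible, then
`X := (A∘P - z·id)⁻¹ ∘ P` satisfies `(A - z·id)∘X = X∘(A - z·id) = P` and
`P∘X = X∘P = X`. -/
theorem stmt15 {R V : Type*} [CommRing R] [AddCommGroup V] [Module R V]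
    (A P : Module.End R V) (z : R) (hP : P * P = P) (hAP : A * P = P * A)
    (h : IsUnit (A * P - z • (1 : Module.End R V))) :
    (A - z • 1) * (Ring.inverse (A * P - z • (1 : Module.End R V)) * P) = P
      ∧ (Ring.inverse (A * P - z • (1 : Module.End R V)) * P) * (A - z • 1) = P
      ∧ P * (Ring.inverse (A * P - z • (1 : Module.End R V)) * P)
          = Ring.inverse (A * P - z • (1 : Module.End R V)) * P
      ∧ (Ring.inverse (A * P - z • (1 : Module.End R V)) * P) * P
          = Ring.inverse (A * P - z • (1 : Module.End R V)) * P :=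
  aux1 A P (z • 1) (fun x => by rw [smul_mul_assoc, mul_smul_comm, one_mul, mul_one]) hP hAP h
end

section
/- Let z ∈ ℂ with |z| = 1, let x₀, x₁ be integers with 0 < x₀ < x₁, and let C⁰, C¹, C² be 2×2 unitary complex matrices. Define 𝚊(z) = z^{x₁+1} − C¹₂₁C²₁₂ z^{2x₀−x₁+1} − C⁰₂₁C¹₁₂ z^{x₁−2x₀+1} − C⁰₂₁C²₁₂ (det C¹) z^{−x₁+1} and 𝚋(z) = C²₂₁ z^{x₁} + C¹₂₁ (det C²) z^{2x₀−x₁} − C⁰₂₁C¹₁₂C²₂₁ z^{x₁−2x₀} + C⁰₂₁ (det C¹)(det C²) z^{−x₁}. Then |𝚊(z)|² = |C⁰₁₁ C¹₁₁ C²₁₁|² + |𝚋(z)|². -/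
/-!
The amplitudes are entries of a product of transfer matrices. Put
`K(C) = [[1, -C₀₁], [C₁₀, det C]]` for a coin and `Δ(d) = diag(z^d, z^{-d})` for free propagation
over `d` sites; then `M = K(C²) Δ(x₁ - x₀) K(C¹) Δ(x₀) K(C⁰)` has `𝚊(z) = z M₀₀` and `𝚋(z) = M₁₀`.
With `J = diag(1, -1)`, unitarity of `C` (which forces `C₀₁ = -conj C₁₀ det C`) gives
`K(C)ᴴ J K(C) = |C₀₀|² J`, and `|z| = 1` gives `Δᴴ J Δ = J`. Hence
`Mᴴ J M = |C⁰₀₀ C¹₀₀ C²₀₀|² J`, and its `(0,0)` entry is `|M₀₀|² - |M₁₀|²`.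
Matrix entries are indexed from `0` throughout.
-/

open Matrix

section ScalesForm

variable {n R : Type*} [Fintype n] [CommRing R] [StarRing R]

def ScalesForm (J : Matrix n n R) (r : R) (M : Matrix n n R) : Prop :=
  Mᴴ * J * M = r • J

theorem ScalesForm.mul {J M N : Matrix n n R} {r s : R} (hM : ScalesForm J r M)
    (hN : ScalesForm J s N) : ScalesForm J (r * s) (M * N) :=
  calc (M * N)ᴴ * J * (M * N) = Nᴴ * (Mᴴ * J * M) * N := by
        simp only [conjTranspose_mul, Matrix.mul_assoc]
    _ = (r * s) • J := by rw [hM, Matrix.mul_smul, Matrix.smul_mul, hN, smul_smul]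

end ScalesForm

def lorentzForm : Matrix (Fin 2) (Fin 2) ℂ := !![1, 0; 0, -1]

theorem scalesForm_lorentzForm_iff (a b c d r : ℂ) :
    ScalesForm lorentzForm r !![a, b; c, d] ↔
      starRingEnd ℂ a * a - starRingEnd ℂ c * c = r ∧
      starRingEnd ℂ a * b - starRingEnd ℂ c * d = 0 ∧
      starRingEnd ℂ b * a - starRingEnd ℂ d * c = 0 ∧
      starRingEnd ℂ b * b - starRingEnd ℂ d * d = -r := by
  simp [ScalesForm, ← Matrix.ext_iff, Fin.forall_fin_two, lorentzForm, mul_apply,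
    Fin.sum_univ_two, sub_eq_add_neg, and_assoc]

theorem ScalesForm.normSq_sub_normSq {M : Matrix (Fin 2) (Fin 2) ℂ} {r : ℝ}
    (hM : ScalesForm lorentzForm r M) :
    Complex.normSq (M 0 0) - Complex.normSq (M 1 0) = r := by
  rw [eta_fin_two M, scalesForm_lorentzForm_iff] at hM
  exact_mod_cast (by push_cast [Complex.normSq_eq_conj_mul_self]; exact hM.1 :
    ((Complex.normSq (M 0 0) - Complex.normSq (M 1 0) : ℝ) : ℂ) = r)

noncomputable def shiftTransfer (z : ℂ) (d : ℤ) : Matrix (Fin 2) (Fin 2) ℂ :=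
  !![z ^ d, 0; 0, z ^ (-d)]

theorem scalesForm_shiftTransfer {z : ℂ} (hz : ‖z‖ = 1) (d : ℤ) :
    ScalesForm lorentzForm 1 (shiftTransfer z d) := by
  have hzz : starRingEnd ℂ z * z = 1 := by
    rw [Complex.conj_mul', hz]
    norm_num
  rw [shiftTransfer, scalesForm_lorentzForm_iff]
  simp [← mul_zpow, ← mul_inv, hzz]

def coinTransfer (C : Matrix (Fin 2) (Fin 2) ℂ) : Matrix (Fin 2) (Fin 2) ℂ :=
  !![1, -C 0 1; C 1 0, C.det]

theorem apply_zero_one_of_mem_unitaryGroup_fin_two {C : Matrix (Fin 2) (Fin 2) ℂ}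
    (hC : C ∈ unitaryGroup (Fin 2) ℂ) : C 0 1 = -starRingEnd ℂ (C 1 0) * C.det := by
  have hCC := Unitary.star_mul_self_of_mem hC
  have e00 := congr_fun₂ hCC 0 0
  have e01 := congr_fun₂ hCC 0 1
  simp only [Matrix.mul_apply, Fin.sum_univ_two, star_apply, one_apply_eq,
    one_apply_ne zero_ne_one, RCLike.star_def] at e00 e01
  rw [det_fin_two]
  linear_combination -(C 0 1) * e00 + C 0 0 * e01

theorem scalesForm_coinTransfer {C : Matrix (Fin 2) (Fin 2) ℂ}
    (hC : C ∈ unitaryGroup (Fin 2) ℂ) :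
    ScalesForm lorentzForm (Complex.normSq (C 0 0)) (coinTransfer C) := by
  have hCC := Unitary.star_mul_self_of_mem hC
  have hcol := congr_fun₂ hCC 0 0
  simp only [Matrix.mul_apply, Fin.sum_univ_two, star_apply, one_apply_eq,
    RCLike.star_def] at hcol
  have hdet : starRingEnd ℂ C.det * C.det = 1 :=
    Unitary.star_mul_self_of_mem (det_of_mem_unitary hC)
  rw [coinTransfer, scalesForm_lorentzForm_iff, apply_zero_one_of_mem_unitaryGroup_fin_two hC,
    Complex.normSq_eq_conj_mul_self]
  simp only [map_one, map_neg, map_mul, Complex.conj_conj]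
  refine ⟨?_, ?_, ?_, ?_⟩
  · linear_combination -hcol
  · ring
  · ring
  · linear_combination (starRingEnd ℂ (C 1 0) * C 1 0 - 1) * hdet + hcol

noncomputable def tripleBarrierTransfer (z : ℂ) (x₀ x₁ : ℤ)
    (C0 C1 C2 : Matrix (Fin 2) (Fin 2) ℂ) : Matrix (Fin 2) (Fin 2) ℂ :=
  coinTransfer C2 * shiftTransfer z (x₁ - x₀) * coinTransfer C1 * shiftTransfer z x₀ *
    coinTransfer C0

theorem scalesForm_tripleBarrierTransfer {z : ℂ} (hz : ‖z‖ = 1) (x₀ x₁ : ℤ)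
    {C0 C1 C2 : Matrix (Fin 2) (Fin 2) ℂ} (hC0 : C0 ∈ unitaryGroup (Fin 2) ℂ)
    (hC1 : C1 ∈ unitaryGroup (Fin 2) ℂ) (hC2 : C2 ∈ unitaryGroup (Fin 2) ℂ) :
    ScalesForm lorentzForm (Complex.normSq (C0 0 0 * C1 0 0 * C2 0 0))
      (tripleBarrierTransfer z x₀ x₁ C0 C1 C2) := by
  unfold tripleBarrierTransfer
  convert ((((scalesForm_coinTransfer hC2).mul (scalesForm_shiftTransfer hz (x₁ - x₀))).mul
    (scalesForm_coinTransfer hC1)).mul (scalesForm_shiftTransfer hz x₀)).mul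
    (scalesForm_coinTransfer hC0) using 1
  push_cast [Complex.normSq_mul]
  ring

theorem tripleBarrierTransfer_apply_zero_zero {z : ℂ} (hz : z ≠ 0) (x₀ x₁ : ℤ)
    (C0 C1 C2 : Matrix (Fin 2) (Fin 2) ℂ) :
    z * tripleBarrierTransfer z x₀ x₁ C0 C1 C2 0 0 =
      z ^ (x₁ + 1) - C1 1 0 * C2 0 1 * z ^ (2 * x₀ - x₁ + 1)
        - C0 1 0 * C1 0 1 * z ^ (x₁ - 2 * x₀ + 1)
        - C0 1 0 * C2 0 1 * C1.det * z ^ (-x₁ + 1) := by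
  simp only [tripleBarrierTransfer, coinTransfer, shiftTransfer, mul_apply, Fin.sum_univ_two,
    of_apply, cons_val', cons_val_zero, cons_val_one, cons_val_fin_one, zpow_add₀ hz, zpow_sub₀ hz,
    _root_.zpow_neg, two_mul]
  field_simp
  ring

theorem tripleBarrierTransfer_apply_one_zero {z : ℂ} (hz : z ≠ 0) (x₀ x₁ : ℤ)
    (C0 C1 C2 : Matrix (Fin 2) (Fin 2) ℂ) :
    tripleBarrierTransfer z x₀ x₁ C0 C1 C2 1 0 =
      C2 1 0 * z ^ x₁ + C1 1 0 * C2.det * z ^ (2 * x₀ - x₁)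
        - C0 1 0 * C1 0 1 * C2 1 0 * z ^ (x₁ - 2 * x₀)
        + C0 1 0 * C1.det * C2.det * z ^ (-x₁) := by
  simp only [tripleBarrierTransfer, coinTransfer, shiftTransfer, mul_apply, Fin.sum_univ_two,
    of_apply, cons_val', cons_val_zero, cons_val_one, cons_val_fin_one, zpow_add₀ hz, zpow_sub₀ hz,
    _root_.zpow_neg, two_mul]
  field_simp
  ring

theorem stmt17_general (z : ℂ) (hz : ‖z‖ = 1) (x₀ x₁ : ℤ)
    (C0 C1 C2 : Matrix (Fin 2) (Fin 2) ℂ)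
    (hC0 : C0 ∈ Matrix.unitaryGroup (Fin 2) ℂ) (hC1 : C1 ∈ Matrix.unitaryGroup (Fin 2) ℂ)
    (hC2 : C2 ∈ Matrix.unitaryGroup (Fin 2) ℂ) :
    ‖(z ^ (x₁ + 1) - C1 1 0 * C2 0 1 * z ^ (2 * x₀ - x₁ + 1)
          - C0 1 0 * C1 0 1 * z ^ (x₁ - 2 * x₀ + 1)
          - C0 1 0 * C2 0 1 * C1.det * z ^ (-x₁ + 1))‖ ^ 2
      = ‖(C0 0 0 * C1 0 0 * C2 0 0)‖ ^ 2
        + ‖(C2 1 0 * z ^ x₁ + C1 1 0 * C2.det * z ^ (2 * x₀ - x₁)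
              - C0 1 0 * C1 0 1 * C2 1 0 * z ^ (x₁ - 2 * x₀)
              + C0 1 0 * C1.det * C2.det * z ^ (-x₁))‖ ^ 2 := by
  have hz0 : z ≠ 0 := norm_ne_zero_iff.mp (hz ▸ one_ne_zero)
  rw [← tripleBarrierTransfer_apply_zero_zero hz0, ← tripleBarrierTransfer_apply_one_zero hz0,
    norm_mul, hz, one_mul]
  simp only [Complex.sq_norm]
  linarith [(scalesForm_tripleBarrierTransfer hz x₀ x₁ hC0 hC1 hC2).normSq_sub_normSq]

/-- Unitarity identity for the triple barrier amplitudes on the unit circle: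
`|𝚊(z)|² = |C⁰₁₁C¹₁₁C²₁₁|² + |𝚋(z)|²`. -/
theorem stmt17 (z : ℂ) (hz : ‖z‖ = 1) (x₀ x₁ : ℤ) (h0 : 0 < x₀) (h01 : x₀ < x₁)
    (C0 C1 C2 : Matrix (Fin 2) (Fin 2) ℂ)
    (hC0 : C0 ∈ Matrix.unitaryGroup (Fin 2) ℂ) (hC1 : C1 ∈ Matrix.unitaryGroup (Fin 2) ℂ)
    (hC2 : C2 ∈ Matrix.unitaryGroup (Fin 2) ℂ) :
    ‖(z ^ (x₁ + 1) - C1 1 0 * C2 0 1 * z ^ (2 * x₀ - x₁ + 1)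
          - C0 1 0 * C1 0 1 * z ^ (x₁ - 2 * x₀ + 1)
          - C0 1 0 * C2 0 1 * C1.det * z ^ (-x₁ + 1))‖ ^ 2
      = ‖(C0 0 0 * C1 0 0 * C2 0 0)‖ ^ 2
        + ‖(C2 1 0 * z ^ x₁ + C1 1 0 * C2.det * z ^ (2 * x₀ - x₁)
              - C0 1 0 * C1 0 1 * C2 1 0 * z ^ (x₁ - 2 * x₀)
              + C0 1 0 * C1.det * C2.det * z ^ (-x₁))‖ ^ 2 :=
  stmt17_general z hz x₀ x₁ C0 C1 C2 hC0 hC1 hC2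
end

section
/- Let ε ∈ ℝ with 0 ≤ ε < 1/√2, set s = √(1 − ε²), and let M(ε) be the 6×6 complex matrix determined by M e₁ = s·e₂ + ε·e₅, M e₂ = s·e₃, M e₃ = s·e₄ + ε·e₆, M e₄ = s·e₁, M e₅ = ε·e₁, M e₆ = ε·e₃. Let λ ∈ ℂ satisfy λ² = −(1 − 2ε²) (i.e., λ = ± i√(1 − 2ε²)). Then the vector v = (λ, s, −λ, −s, ε, −ε) satisfies M(ε)·v = λ·v, and the vector w = (λ, s, −λ, −s, −ε, ε) satisfies M(ε)ᴴ·w = conj(λ)·w. -/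
open Matrix

@[simp] lemma my_cons_val_five {α : Type*} {m : ℕ} (x : α) (u : Fin (m+5) → α) :
    Matrix.vecCons x u 5
      = Matrix.vecHead (Matrix.vecTail (Matrix.vecTail (Matrix.vecTail (Matrix.vecTail u)))) :=
  rfl

/-- The outgoing and incoming resonant states of the matrix Schrödinger model restricted
to the interior: for `λ² = -(1 - 2ε²)`, `v = (λ, s, -λ, -s, ε, -ε)` satisfies
`M(ε)v = λv` and `w = (λ, s, -λ, -s, -ε, ε)` satisfies `M(ε)ᴴw = conj(λ)w`. -/
theorem stmt18 (ε : ℝ) (hε0 : 0 ≤ ε) (hε1 : ε < 1 / Real.sqrt 2) (l : ℂ)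
    (hl : l ^ 2 = -(1 - 2 * (ε : ℂ) ^ 2)) :
    let s : ℂ := (Real.sqrt (1 - ε ^ 2) : ℝ)
    let e : ℂ := (ε : ℝ)
    let M : Matrix (Fin 6) (Fin 6) ℂ :=
      !![0, 0, 0, s, e, 0;
         s, 0, 0, 0, 0, 0;
         0, s, 0, 0, 0, e;
         0, 0, s, 0, 0, 0;
         e, 0, 0, 0, 0, 0;
         0, 0, e, 0, 0, 0]
    M.mulVec ![l, s, -l, -s, e, -e] = l • ![l, s, -l, -s, e, -e]
      ∧ M.conjTranspose.mulVec ![l, s, -l, -s, -e, e]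
          = (starRingEnd ℂ l) • ![l, s, -l, -s, -e, e] := by
  intro s e M
  have hs2 : Real.sqrt 2 > 0 := Real.sqrt_pos.mpr (by norm_num)
  have hsq2 : Real.sqrt 2 * Real.sqrt 2 = 2 := Real.mul_self_sqrt (by norm_num)
  have hmul : ε * Real.sqrt 2 < 1 := by
    rw [div_eq_inv_mul, mul_one] at hε1
    calc ε * Real.sqrt 2 < (Real.sqrt 2)⁻¹ * Real.sqrt 2 :=
          mul_lt_mul_of_pos_right hε1 hs2
      _ = 1 := inv_mul_cancel₀ (ne_of_gt hs2)
  have h2 : 2 * ε ^ 2 ≤ 1 := by nlinarith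
  have he1 : ε ^ 2 ≤ 1 := by nlinarith
  -- s * s = 1 - e^2 in ℂ
  have hssR : Real.sqrt (1 - ε ^ 2) * Real.sqrt (1 - ε ^ 2) = 1 - ε ^ 2 :=
    Real.mul_self_sqrt (by linarith)
  have hss : s * s = 1 - e * e := by
    show ((Real.sqrt (1 - ε ^ 2) : ℝ) : ℂ) * ((Real.sqrt (1 - ε ^ 2) : ℝ) : ℂ)
        = 1 - (ε : ℂ) * (ε : ℂ)
    rw [← Complex.ofReal_mul, hssR]
    push_cast
    ring
  -- rewrite hl with a real cast
  have hlR : l ^ 2 = ((-(1 - 2 * ε ^ 2) : ℝ) : ℂ) := by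
    rw [hl]; push_cast; ring
  have him : (l ^ 2).im = 0 := by rw [hlR, Complex.ofReal_im]
  have hre : (l ^ 2).re ≤ 0 := by rw [hlR, Complex.ofReal_re]; linarith
  have h1 : (l ^ 2).im = 2 * l.re * l.im := by
    simp [pow_two, Complex.mul_im]; ring
  have h2' : (l ^ 2).re = l.re * l.re - l.im * l.im := by
    simp [pow_two, Complex.mul_re]
  rw [h1] at him
  rw [h2'] at hre
  have hlre : l.re = 0 := by
    rcases mul_eq_zero.mp him with h | h
    · rcases mul_eq_zero.mp h with h' | h'
      · norm_num at h'
      · exact h'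
    · rw [h] at hre
      have hz : l.re * l.re = 0 := le_antisymm (by linarith) (mul_self_nonneg _)
      exact mul_self_eq_zero.mp hz
  have hconj : (starRingEnd ℂ) l = -l := by
    apply Complex.ext <;> simp [hlre]
  have hll : l * l = e * e - s * s := by
    linear_combination hl + hss
  have hes : (starRingEnd ℂ) e = e := Complex.conj_ofReal ε
  have hss' : (starRingEnd ℂ) s = s := Complex.conj_ofReal _
  clear_value s e
  constructor
  · funext i
    fin_cases i <;>
      · simp [M, Matrix.mulVec, dotProduct, Fin.sum_univ_six, Matrix.vecHead, Matrix.vecTail,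
          Function.comp]
        first
          | ring1
          | linear_combination hll
          | linear_combination -hll
          | linear_combination (2:ℂ) * hll
          | linear_combination (-2:ℂ) * hll
  · funext i
    fin_cases i <;>
      · simp [M, Matrix.conjTranspose_apply, Matrix.mulVec, dotProduct,
          Fin.sum_univ_six, hes, hss', hconj, Matrix.vecHead, Matrix.vecTail, Function.comp]
        first
          | ring1
          | linear_combination hll
          | linear_combination -hll
          | linear_combination (2:ℂ) * hll
          | linear_combination (-2:ℂ) * hll
end

section
/- Let z ∈ ℂ \ {0}, let C : ℤ → Matrix (Fin 2) (Fin 2) ℂ be a family of 2×2 complex matrices with C(x)₁₁ ≠ 0 for all x, and let φ : ℤ → ℂ². Then the following are equivalent: (i) for every x ∈ ℤ, (C(x+1)·φ(x+1))₁ = z·φ(x)₁ and (C(x−1)·φ(x−1))₂ = z·φ(x)₂ (i.e., φ solves the pointwise eigenvalue equation (Ũ − z)φ = 0 for the coined walk Ũ = SC); (ii) for every x ∈ ℤ, the vector (φ(x)₁, φ(x+1)₂) equals 𝒯_z(C(x)) applied to the vector (φ(x−1)₁, φ(x)₂). -/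
/-!
The eigenvalue equation at site `x` involves only `φ(x)`, `φ(x-1)₁` and `φ(x+1)₂`: shifting its
first component one site to the left and its second one site to the right turns it into
`C(x) φ(x) = z (φ(x-1)₁, φ(x+1)₂)`. Solving these two linear equations for the pair
`(φ(x)₁, φ(x+1)₂)`, possible because `C(x)₁₁ ≠ 0` and `z ≠ 0`, yields exactly `𝒯_z(C(x))`; the
`det C` entry appears when the solved `φ(x)₁` is substituted into the second equation.
-/

open Matrix

lemma transferMatrix_mulVec (z : ℂ) (C : Matrix (Fin 2) (Fin 2) ℂ) (a b : ℂ) :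
    transferMatrix z C *ᵥ ![a, b]
      = ![(C 0 0)⁻¹ * (z * a - C 0 1 * b), (C 0 0)⁻¹ * (C 1 0 * a + z⁻¹ * C.det * b)] := by
  simp only [transferMatrix, smul_mulVec, mulVec_fin_two, of_apply, cons_val', cons_val_zero,
    cons_val_one, cons_val_fin_one, smul_cons, smul_empty, smul_eq_mul]
  congr 2
  ring

theorem mulVec_eq_smul_iff_transferMatrix {z : ℂ} (hz : z ≠ 0) {C : Matrix (Fin 2) (Fin 2) ℂ}
    (hC : C 0 0 ≠ 0) (u : Fin 2 → ℂ) (a d : ℂ) :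
    C *ᵥ u = z • ![a, d] ↔ ![u 0, d] = transferMatrix z C *ᵥ ![a, u 1] := by
  rw [transferMatrix_mulVec, mulVec_fin_two, smul_cons, smul_cons, smul_empty]
  simp only [vecCons_inj, and_true, det_fin_two, smul_eq_mul]
  constructor
  · rintro ⟨h₀, h₁⟩
    constructor
    · field_simp
      linear_combination h₀
    · field_simp
      linear_combination C 1 0 * h₀ - C 0 0 * h₁
  · rintro ⟨h₀, h₁⟩
    field_simp at h₀ h₁
    refine ⟨by linear_combination h₀, mul_left_cancel₀ hC ?_⟩
    linear_combination C 1 0 * h₀ - h₁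

lemma forall_walk_eq_iff_forall_mulVec (z : ℂ) (C : ℤ → Matrix (Fin 2) (Fin 2) ℂ)
    (φ : ℤ → Fin 2 → ℂ) :
    (∀ x : ℤ, (C (x + 1) *ᵥ φ (x + 1)) 0 = z * φ x 0 ∧ (C (x - 1) *ᵥ φ (x - 1)) 1 = z * φ x 1)
      ↔ ∀ x : ℤ, C x *ᵥ φ x = z • ![φ (x - 1) 0, φ (x + 1) 1] := by
  constructor
  · intro h x
    have h₀ := (h (x - 1)).1
    have h₁ := (h (x + 1)).2
    rw [sub_add_cancel] at h₀
    rw [add_sub_cancel_right] at h₁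
    ext i
    fin_cases i
    · simpa using h₀
    · simpa using h₁
  · intro h x
    have h₀ := congrFun (h (x + 1)) 0
    have h₁ := congrFun (h (x - 1)) 1
    rw [add_sub_cancel_right] at h₀
    rw [sub_add_cancel] at h₁
    exact ⟨by simpa using h₀, by simpa using h₁⟩

/-- `φ` solves the pointwise eigenvalue equation `(Ũ - z)φ = 0` for the coined walk
`Ũ = SC` if and only if the transfer matrix relation
`(φ(x)₁, φ(x+1)₂) = 𝒯_z(C(x)) (φ(x-1)₁, φ(x)₂)` holds for all `x`. -/
theorem stmt19 (z : ℂ) (hz : z ≠ 0) (C : ℤ → Matrix (Fin 2) (Fin 2) ℂ)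
    (hC : ∀ x, C x 0 0 ≠ 0) (φ : ℤ → Fin 2 → ℂ) :
    (∀ x : ℤ, ((C (x + 1)).mulVec (φ (x + 1))) 0 = z * φ x 0
        ∧ ((C (x - 1)).mulVec (φ (x - 1))) 1 = z * φ x 1)
      ↔ (∀ x : ℤ, ![φ x 0, φ (x + 1) 1]
          = (transferMatrix z (C x)).mulVec ![φ (x - 1) 0, φ x 1]) := by
  rw [forall_walk_eq_iff_forall_mulVec]
  exact forall_congr' fun x => mulVec_eq_smul_iff_transferMatrix hz (hC x) (φ x) _ _
end
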